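/- For every γ̄ > 0 and every g_l ≥ 0, the integral ∫_{g_l}^∞ log₂(1 + γ̄ g) e^{−g} dg equals e^{−g_l} log₂(1 + γ̄ g_l) + (e^{1/γ̄} / ln 2) · E₁(1/γ̄ + g_l). -/

import Mathlib

/-!
Integration by parts: `-e^{-g} log₂(1 + γ̄ g)` differentiates to the integrand minus
`e^{-g} γ̄ / ((1 + γ̄ g) ln 2) = e^{-g} / ((1/γ̄ + g) ln 2)`, and the shift `t = 1/γ̄ + g` turns
the latter into `e^{1/γ̄} e^{-t} / (t ln 2)`, whose primitive is `-e^{1/γ̄} E₁(t) / ln 2`.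
Both boundary terms vanish at infinity, and since the integrand is nonnegative on `g ≥ 0`,
that limit of the primitive already makes it integrable.
-/

open MeasureTheory Real

/-- The exponential integral function `E₁(z) = ∫_z^∞ e^{−t}/t dt`. -/
noncomputable def expInt (z : ℝ) : ℝ := ∫ t in Set.Ioi z, Real.exp (-t) / t

open Set Filter Topology

lemma integrableOn_exp_neg_div_Ioi {z : ℝ} (hz : 0 < z) :
    IntegrableOn (fun t : ℝ => exp (-t) / t) (Ioi z) := by
  refine ((integrableOn_exp_neg_Ioi z).div_const z).mono' ?_ ?_
  · exact (continuous_exp.comp continuous_neg).measurable.div measurable_id |>.aestronglyMeasurable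
  · filter_upwards [ae_restrict_mem measurableSet_Ioi] with t (ht : z < t)
    rw [norm_of_nonneg (div_nonneg (exp_pos _).le (hz.trans ht).le)]
    exact div_le_div_of_nonneg_left (exp_pos _).le hz ht.le

lemma expInt_eq_sub_intervalIntegral {a b : ℝ} (ha : 0 < a) (hab : a ≤ b) :
    expInt b = expInt a - ∫ t in a..b, exp (-t) / t := by
  have hfi := integrableOn_exp_neg_div_Ioi ha
  rw [eq_sub_iff_add_eq, add_comm, expInt, expInt, intervalIntegral.integral_of_le hab,
    ← setIntegral_union (Ioc_disjoint_Ioi le_rfl) measurableSet_Ioi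
      (hfi.mono_set Ioc_subset_Ioi_self) (hfi.mono_set (Ioi_subset_Ioi hab)),
    Ioc_union_Ioi_eq_Ioi hab]

lemma hasDerivAt_expInt {z : ℝ} (hz : 0 < z) : HasDerivAt expInt (-(exp (-z) / z)) z := by
  have hz2 : 0 < z / 2 := half_pos hz
  have hii : IntervalIntegrable (fun t => exp (-t) / t) volume (z / 2) z :=
    (intervalIntegrable_iff_integrableOn_Ioc_of_le (half_le_self hz.le)).2
      ((integrableOn_exp_neg_div_Ioi hz2).mono_set Ioc_subset_Ioi_self)
  have hcont : ContinuousAt (fun t => exp (-t) / t) z :=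
    (continuous_exp.comp continuous_neg).continuousAt.div continuousAt_id hz.ne'
  have hmeas : StronglyMeasurableAtFilter (fun t => exp (-t) / t) (𝓝 z) :=
    ((continuous_exp.comp continuous_neg).measurable.div measurable_id).stronglyMeasurable
      |>.stronglyMeasurableAtFilter
  refine ((intervalIntegral.integral_hasDerivAt_right hii hmeas hcont).const_sub
    (expInt (z / 2))).congr_of_eventuallyEq ?_
  filter_upwards [eventually_gt_nhds (half_lt_self hz)] with y hy
  exact expInt_eq_sub_intervalIntegral hz2 hy.le

lemma tendsto_expInt_atTop : Tendsto expInt atTop (𝓝 0) := by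
  have hlim := (intervalIntegral_tendsto_integral_Ioi 1
    (integrableOn_exp_neg_div_Ioi one_pos) tendsto_id).const_sub (expInt 1)
  rw [expInt, sub_self] at hlim
  refine hlim.congr' ?_
  filter_upwards [eventually_ge_atTop 1] with y hy
  exact (expInt_eq_sub_intervalIntegral one_pos hy).symm

lemma tendsto_exp_neg_mul_log_one_add_mul_atTop {γ : ℝ} (hγ : 0 ≤ γ) :
    Tendsto (fun g => exp (-g) * log (1 + γ * g)) atTop (𝓝 0) := by
  have hdom : Tendsto (fun g : ℝ => γ * (g ^ 1 * exp (-g))) atTop (𝓝 0) := by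
    simpa using (tendsto_pow_mul_exp_neg_atTop_nhds_zero 1).const_mul γ
  refine tendsto_of_tendsto_of_tendsto_of_le_of_le' tendsto_const_nhds hdom ?_ ?_
  · filter_upwards [eventually_ge_atTop 0] with g hg
    exact mul_nonneg (exp_pos _).le (log_nonneg (by nlinarith))
  · filter_upwards [eventually_ge_atTop 0] with g hg
    have hlog : log (1 + γ * g) ≤ γ * g := by
      linarith [log_le_sub_one_of_pos (by nlinarith : 0 < 1 + γ * g)]
    nlinarith [mul_le_mul_of_nonneg_left hlog (exp_pos (-g)).le]

noncomputable def throughputPrimitive (γ g : ℝ) : ℝ :=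
  -(exp (-g) * logb 2 (1 + γ * g)) - exp (1 / γ) / log 2 * expInt (1 / γ + g)

lemma hasDerivAt_throughputPrimitive {γ x : ℝ} (hγ : 0 < γ) (hx : 0 < 1 + γ * x) :
    HasDerivAt (throughputPrimitive γ) (logb 2 (1 + γ * x) * exp (-x)) x := by
  unfold throughputPrimitive
  have hshift : 0 < 1 / γ + x := by
    rw [show 1 / γ + x = (1 + γ * x) / γ by field_simp]; positivity
  have hexp : HasDerivAt (fun g => exp (-g)) (-exp (-x)) x := by
    simpa using (hasDerivAt_neg x).exp
  have hlogb : HasDerivAt (fun g => logb 2 (1 + γ * g)) (γ / (1 + γ * x) / log 2) x := by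
    simpa [logb] using
      ((((hasDerivAt_id x).const_mul γ).const_add 1).log hx.ne').div_const (log 2)
  have hE :
      HasDerivAt (fun g => expInt (1 / γ + g)) (-(exp (-(1 / γ + x)) / (1 / γ + x))) x := by
    simpa using (hasDerivAt_expInt hshift).comp_const_add (1 / γ) x
  refine (((hexp.mul hlogb).neg).sub (hE.const_mul _)).congr_deriv ?_
  have hsubst :
      exp (1 / γ) * (exp (-(1 / γ + x)) / (1 / γ + x)) = γ * exp (-x) / (1 + γ * x) := by
    rw [neg_add, exp_add, ← mul_div_assoc, ← mul_assoc, ← exp_add, add_neg_cancel, exp_zero,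
      one_mul, show 1 / γ + x = (1 + γ * x) / γ by field_simp, div_div_eq_mul_div, mul_comm]
  rw [mul_neg, ← mul_div_right_comm, hsubst]
  ring

lemma tendsto_throughputPrimitive_atTop {γ : ℝ} (hγ : 0 < γ) :
    Tendsto (throughputPrimitive γ) atTop (𝓝 0) := by
  unfold throughputPrimitive
  have hlogb := (tendsto_exp_neg_mul_log_one_add_mul_atTop hγ.le).div_const (log 2)
  have hE := tendsto_expInt_atTop.comp (tendsto_atTop_add_const_left _ (1 / γ) tendsto_id)
  simpa [logb, mul_div_assoc] using
    hlogb.neg.sub (hE.const_mul (exp (1 / γ) / log 2))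

/-- Closed-form ergodic throughput of the PHAT-PI scheme (Theorem 2). -/
theorem phat_pi_ergodic_throughput (γ : ℝ) (hγ : 0 < γ) (gl : ℝ) (hgl : 0 ≤ gl) :
    ∫ g in Set.Ioi gl, Real.logb 2 (1 + γ * g) * Real.exp (-g)
      = Real.exp (-gl) * Real.logb 2 (1 + γ * gl)
        + Real.exp (1 / γ) / Real.log 2 * expInt (1 / γ + gl) := by
  have hγx : ∀ x ∈ Ici gl, 0 ≤ γ * x := fun x hx => mul_nonneg hγ.le (hgl.trans hx)
  have hprimitive : ∀ x ∈ Ici gl, HasDerivAt (throughputPrimitive γ)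
      (logb 2 (1 + γ * x) * exp (-x)) x :=
    fun x hx => hasDerivAt_throughputPrimitive hγ (by linarith [hγx x hx])
  have hintegrand_nonneg : ∀ x ∈ Ioi gl, 0 ≤ logb 2 (1 + γ * x) * exp (-x) := fun x hx =>
    mul_nonneg (logb_nonneg one_lt_two (by linarith [hγx x (Ioi_subset_Ici_self hx)]))
      (exp_pos _).le
  rw [integral_Ioi_of_hasDerivAt_of_nonneg' hprimitive hintegrand_nonneg
    (tendsto_throughputPrimitive_atTop hγ), throughputPrimitive]
  ring
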